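/- For all a ∈ X and B ⊆ X: a ∈ cl^{Φ*}(B) if and only if the family (φ^r̄(a))_{r̄ ∈ ℕ^m} is not cl-independent over Θ(B); that is, if and only if there exists r̄ ∈ ℕ^m with φ^r̄(a) ∈ cl(Θ(B) ∪ {φ^ū(a) : ū ∈ ℕ^m, ū ≠ r̄}). -/

import Mathlib

open Set

/-- A finitary matroid (pregeometry): a closure operator satisfying monotonicity,
idempotence, finite character and Steinitz exchange. -/
structure FinMatroid (X : Type*) where
  cl : Set X → Set X
  subset_cl : ∀ A : Set X, A ⊆ cl A
  cl_mono : ∀ ⦃A B : Set X⦄, A ⊆ B → cl A ⊆ cl B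
  cl_idem : ∀ A : Set X, cl (cl A) = cl A
  cl_finChar : ∀ (A : Set X) (a : X), a ∈ cl A → ∃ A₀ ⊆ A, A₀.Finite ∧ a ∈ cl A₀
  cl_exchange : ∀ (a b : X) (A : Set X), a ∈ cl (A ∪ {b}) → a ∉ cl A → b ∈ cl (A ∪ {a})

namespace FinMatroid

variable {X : Type*}

/-- `B` is `cl`-independent over `A`. -/
def Indep (M : FinMatroid X) (A B : Set X) : Prop :=
  ∀ b ∈ B, b ∉ M.cl (A ∪ (B \ {b}))

/-- `B₀` is a basis for `B` over `A`. -/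
def IsBasisOver (M : FinMatroid X) (A B B₀ : Set X) : Prop :=
  B₀ ⊆ B ∧ M.Indep A B₀ ∧ B ⊆ M.cl (A ∪ B₀)

/-- The rank `rk(B|A)`: the common cardinality of bases of `B` over `A`. -/
noncomputable def rk (M : FinMatroid X) (B A : Set X) : ℕ :=
  sInf {n : ℕ | ∃ B₀ : Set X, M.IsBasisOver A B B₀ ∧ B₀.ncard = n}

end FinMatroid

/-- `ψ` is a triangular system for the finitary matroid `M`. -/
def Triangular {X : Type*} (M : FinMatroid X) {n : ℕ} (ψ : Fin n → X → X) : Prop :=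
  ∀ (i : Fin n) (a : X) (B : Set X), a ∈ M.cl B →
    ψ i a ∈ M.cl (⋃ j ∈ Finset.Iic i, (ψ j) '' B)

/-- `ψ` is quasi-triangular: the system augmented by the identity map is triangular. -/
def QuasiTriangular {X : Type*} (M : FinMatroid X) {n : ℕ} (ψ : Fin n → X → X) : Prop :=
  Triangular M (Fin.cons id ψ)

/-- The composite operator `φ^r̄ = φ₁^{r₁} ∘ ⋯ ∘ φ_m^{r_m}` (operators indexed by
pairs `(i, j)` with `i : Fin k`, `j : Fin (d i)`). -/
def opPow {X : Type*} {k : ℕ} {d : Fin k → ℕ} (φ : ∀ i : Fin k, Fin (d i) → X → X)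
    (r : ∀ i : Fin k, Fin (d i) → ℕ) : X → X :=
  (List.finRange k).foldr
    (fun i f => ((List.finRange (d i)).foldr (fun j g => (φ i j)^[r i j] ∘ g) id) ∘ f) id

/-- The operators pairwise commute. -/
def Commuting {X : Type*} {k : ℕ} {d : Fin k → ℕ}
    (φ : ∀ i : Fin k, Fin (d i) → X → X) : Prop :=
  ∀ i j i' j', Function.Commute (φ i j) (φ i' j')

/-- `Φ^{(s̄)}(A)`: images of elements of `A` under all `φ^r̄` with `‖r̄‖ = s̄`. -/
def PhiEq {X : Type*} {k : ℕ} {d : Fin k → ℕ} (φ : ∀ i : Fin k, Fin (d i) → X → X)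
    (s : Fin k → ℕ) (A : Set X) : Set X :=
  {x | ∃ r : ∀ i : Fin k, Fin (d i) → ℕ,
    (∀ i, ∑ j, r i j = s i) ∧ ∃ a ∈ A, x = opPow φ r a}

/-- `Φ^{≼(s̄)}(A)`: images of elements of `A` under all `φ^r̄` with `‖r̄‖ ≼ s̄`. -/
def PhiLe {X : Type*} {k : ℕ} {d : Fin k → ℕ} (φ : ∀ i : Fin k, Fin (d i) → X → X)
    (s : Fin k → ℕ) (A : Set X) : Set X :=
  {x | ∃ r : ∀ i : Fin k, Fin (d i) → ℕ,
    (∀ i, ∑ j, r i j ≤ s i) ∧ ∃ a ∈ A, x = opPow φ r a}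

/-- `|Φ^{(s̄)}|`: the number of `r̄ ∈ ℕ^m` with `‖r̄‖ = s̄`. -/
noncomputable def cntEq {k : ℕ} (d : Fin k → ℕ) (s : Fin k → ℕ) : ℕ :=
  Nat.card {r : ∀ i : Fin k, Fin (d i) → ℕ // ∀ i, ∑ j, r i j = s i}

/-- `|Φ^{≼(s̄)}|`: the number of `r̄ ∈ ℕ^m` with `‖r̄‖ ≼ s̄`. -/
noncomputable def cntLe {k : ℕ} (d : Fin k → ℕ) (s : Fin k → ℕ) : ℕ :=
  Nat.card {r : ∀ i : Fin k, Fin (d i) → ℕ // ∀ i, ∑ j, r i j ≤ s i}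

/-- `Θ(A)`: images of elements of `A` under all the operators `φ^r̄`, `r̄ ∈ ℕ^m`. -/
def Theta {X : Type*} {k : ℕ} {d : Fin k → ℕ} (φ : ∀ i : Fin k, Fin (d i) → X → X)
    (A : Set X) : Set X :=
  {x | ∃ r : ∀ i : Fin k, Fin (d i) → ℕ, ∃ a ∈ A, x = opPow φ r a}

/-- The `Φ`-closure operator. -/
noncomputable def clPhi {X : Type*} {k : ℕ} {d : Fin k → ℕ} (M : FinMatroid X)
    (φ : ∀ i : Fin k, Fin (d i) → X → X) (B : Set X) : Set X :=
  {a | ∃ s : Fin k → ℕ, M.rk (PhiEq φ s {a}) (PhiEq φ s B) < cntEq d s}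

/-- The `Φ*`-closure operator. -/
noncomputable def clPhiStar {X : Type*} {k : ℕ} {d : Fin k → ℕ} (M : FinMatroid X)
    (φ : ∀ i : Fin k, Fin (d i) → X → X) (B : Set X) : Set X :=
  {a | ∃ s : Fin k → ℕ, M.rk (PhiLe φ s {a}) (PhiLe φ s B) < cntLe d s}

/-- View a function `Fin k → ℕ` as a monomial exponent. -/
noncomputable def expOf {k : ℕ} (e : Fin k → ℕ) : Fin k →₀ ℕ :=
  Finsupp.equivFunOnFinite.symm e

/-! A basis of the finite family `(φ^r̄ a)_{‖r̄‖ ≼ s̄}` over `Φ^{≼(s̄)}(B)` that is smaller than the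
index set misses some index `r̄`, so `φ^r̄ a` lies in the closure of the base and the other
members; conversely, such a dependent member can be dropped from any spanning set, so the rank is
below the number of indices. As `s̄` grows, the sets `Φ^{≼(s̄)}(B)` and `{φ^ū a : ‖ū‖ ≼ s̄, ū ≠ r̄}`
exhaust `Θ(B)` and `{φ^ū a : ū ≠ r̄}` along a directed family, so by finite character a dependence
over `Θ(B)` is already one over some `Φ^{≼(s̄)}(B)`. -/

namespace FinMatroid

variable {X : Type*} (M : FinMatroid X)

theorem cl_subset_cl_of_subset_cl {A B : Set X} (h : A ⊆ M.cl B) : M.cl A ⊆ M.cl B :=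
  (M.cl_mono h).trans (M.cl_idem B).subset

variable {M}

theorem Indep.insert {A B₀ : Set X} {c : X} (hB₀ : M.Indep A B₀)
    (hc : c ∉ M.cl (A ∪ B₀)) : M.Indep A (insert c B₀) := by
  rintro b (rfl | hb) hcl
  · exact hc (M.cl_mono
      (union_subset_union_right A (sdiff_singleton_subset_iff.mpr subset_rfl)) hcl)
  have hb' : b ∈ M.cl ((A ∪ (B₀ \ {b})) ∪ {c}) :=
    M.cl_mono (fun x => by
      simp only [mem_union, mem_sdiff, mem_insert_iff, mem_singleton_iff]; tauto) hcl
  refine hc (M.cl_mono ?_ (M.cl_exchange b c _ hb' (hB₀ b hb)))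
  rintro x ((hx | ⟨hx, -⟩) | rfl)
  exacts [Or.inl hx, Or.inr hx, Or.inr hb]

theorem IsBasisOver.union_subset_cl {A C B₀ : Set X} (h : M.IsBasisOver A C B₀) :
    A ∪ C ⊆ M.cl (A ∪ B₀) :=
  union_subset (subset_union_left.trans (M.subset_cl _)) h.2.2

variable (M)

theorem exists_isBasisOver {C : Set X} (hC : C.Finite) (A : Set X) :
    ∃ B₀, M.IsBasisOver A C B₀ := by
  have hfin : {B₀ | B₀ ⊆ C ∧ M.Indep A B₀}.Finite :=
    hC.finite_subsets.subset fun _ h => h.1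
  obtain ⟨B₀, ⟨hB₀C, hB₀⟩, hmax⟩ := hfin.exists_maximalFor ncard _
    ⟨∅, empty_subset C, fun _ h => absurd h (notMem_empty _)⟩
  refine ⟨B₀, hB₀C, hB₀, fun c hcC => by_contra fun hc => ?_⟩
  have hcB₀ : c ∉ B₀ := fun h => hc (M.subset_cl _ (Or.inr h))
  have hlt : B₀.ncard < (insert c B₀).ncard := by
    rw [ncard_insert_of_notMem hcB₀ (hC.subset hB₀C)]; omega
  exact hlt.not_ge (hmax ⟨insert_subset hcC hB₀C, hB₀.insert hc⟩ hlt.le)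

theorem exists_isBasisOver_ncard_eq_rk {C : Set X} (hC : C.Finite) (A : Set X) :
    ∃ B₀, M.IsBasisOver A C B₀ ∧ B₀.ncard = M.rk C A :=
  Nat.sInf_mem (s := {n | ∃ B₀, M.IsBasisOver A C B₀ ∧ B₀.ncard = n})
    (let ⟨B₀, h⟩ := M.exists_isBasisOver hC A; ⟨_, B₀, h, rfl⟩)

theorem rk_le_ncard {A C B₀ : Set X} (h : M.IsBasisOver A C B₀) : M.rk C A ≤ B₀.ncard :=
  Nat.sInf_le ⟨B₀, h, rfl⟩

-- Repetitions in `f` count as dependence: the bound is `S.ncard`, not `(f '' S).ncard`.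
theorem rk_image_lt_ncard_iff {ι : Type*} {f : ι → X} {S : Set ι} (hS : S.Finite)
    (A : Set X) :
    M.rk (f '' S) A < S.ncard ↔ ∃ r ∈ S, f r ∈ M.cl (A ∪ f '' (S \ {r})) := by
  constructor
  · intro hlt
    obtain ⟨B₀, hB₀, hcard⟩ := M.exists_isBasisOver_ncard_eq_rk (hS.image f) A
    obtain ⟨T, hTS, hT⟩ := surjOn_iff_exists_bijOn_subset.mp hB₀.1
    have hTlt : T.ncard < S.ncard := by
      rw [← hT.injOn.ncard_image, hT.image_eq, hcard]; exact hlt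
    obtain ⟨r, hrS, hrT⟩ :=
      exists_of_ssubset (ssubset_of_subset_of_ne hTS (by rintro rfl; omega))
    refine ⟨r, hrS,
      M.cl_mono (union_subset_union_right A ?_) (hB₀.2.2 (mem_image_of_mem f hrS))⟩
    rw [← hT.image_eq]
    exact image_mono fun t ht => ⟨hTS ht, fun h => hrT (h ▸ ht)⟩
  · rintro ⟨r, hrS, hr⟩
    have hDfin : (S \ {r}).Finite := hS.sdiff
    obtain ⟨B₀, hB₀⟩ := M.exists_isBasisOver (hDfin.image f) A
    have hspan : f '' S ⊆ M.cl (A ∪ B₀) := by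
      rw [← insert_sdiff_self_of_mem hrS, image_insert_eq]
      exact insert_subset (M.cl_subset_cl_of_subset_cl hB₀.union_subset_cl hr)
        (subset_union_right.trans hB₀.union_subset_cl)
    calc M.rk (f '' S) A ≤ B₀.ncard :=
          M.rk_le_ncard ⟨hB₀.1.trans (image_mono sdiff_subset), hB₀.2.1, hspan⟩
      _ ≤ (f '' (S \ {r})).ncard := ncard_le_ncard hB₀.1 (hDfin.image f)
      _ ≤ (S \ {r}).ncard := ncard_image_le hDfin
      _ < S.ncard := ncard_lt_ncard (sdiff_singleton_ssubset.mpr hrS) hS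

theorem exists_mem_cl_of_mem_cl_iUnion {ι : Type*} [Nonempty ι] {S : ι → Set X}
    (hS : Directed (· ⊆ ·) S) {x : X} (hx : x ∈ M.cl (⋃ i, S i)) : ∃ i, x ∈ M.cl (S i) := by
  obtain ⟨F, hF, hFfin, hxF⟩ := M.cl_finChar _ x hx
  obtain ⟨i, hi⟩ := hS.exists_mem_subset_of_finset_subset_biUnion (s := hFfin.toFinset)
    (by rwa [hFfin.coe_toFinset])
  exact ⟨i, M.cl_mono (by rwa [hFfin.coe_toFinset] at hi) hxF⟩

end FinMatroid

section MultiIndex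

variable {X : Type*} {k : ℕ}

def multiIndicesLe (d : Fin k → ℕ) (s : Fin k → ℕ) : Set (∀ i : Fin k, Fin (d i) → ℕ) :=
  {u | ∀ i, ∑ j, u i j ≤ s i}

variable {d : Fin k → ℕ}

theorem multiIndicesLe_finite (s : Fin k → ℕ) : (multiIndicesLe d s).Finite :=
  (Finite.pi fun i => Finite.pi fun _ => finite_Iic (s i)).subset fun _ hu i _ j _ =>
    (Finset.single_le_sum (fun _ _ => Nat.zero_le _) (Finset.mem_univ j)).trans (hu i)

theorem multiIndicesLe_mono : Monotone (multiIndicesLe d) :=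
  fun _ _ hst _ hu i => (hu i).trans (hst i)

theorem iUnion_multiIndicesLe : ⋃ s, multiIndicesLe d s = univ :=
  eq_univ_of_forall fun u => mem_iUnion.mpr ⟨fun i => ∑ j, u i j, fun _ => le_rfl⟩

theorem cntLe_eq_ncard (s : Fin k → ℕ) : cntLe d s = (multiIndicesLe d s).ncard := rfl

variable (φ : ∀ i : Fin k, Fin (d i) → X → X)

theorem phiLe_singleton (s : Fin k → ℕ) (a : X) :
    PhiLe φ s {a} = (fun u => opPow φ u a) '' multiIndicesLe d s := by
  ext x
  constructor
  · rintro ⟨u, hu, _, rfl, rfl⟩; exact ⟨u, hu, rfl⟩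
  · rintro ⟨u, hu, rfl⟩; exact ⟨u, hu, a, rfl, rfl⟩

theorem phiLe_mono (B : Set X) : Monotone fun s => PhiLe φ s B :=
  fun _ _ hst _ ⟨u, hu, b, hb, hx⟩ => ⟨u, fun i => (hu i).trans (hst i), b, hb, hx⟩

theorem iUnion_phiLe (B : Set X) : ⋃ s, PhiLe φ s B = Theta φ B := by
  ext x
  simp only [mem_iUnion]
  constructor
  · rintro ⟨s, u, -, b, hb, rfl⟩; exact ⟨u, b, hb, rfl⟩
  · rintro ⟨u, b, hb, rfl⟩; exact ⟨fun i => ∑ j, u i j, u, fun _ => le_rfl, b, hb, rfl⟩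

theorem iUnion_phiLe_union_image (B : Set X) (a : X) (r : ∀ i : Fin k, Fin (d i) → ℕ) :
    ⋃ s, (PhiLe φ s B ∪ (fun u => opPow φ u a) '' (multiIndicesLe d s \ {r})) =
      Theta φ B ∪ {x | ∃ u : ∀ i : Fin k, Fin (d i) → ℕ, u ≠ r ∧ x = opPow φ u a} := by
  rw [iUnion_union_distrib, iUnion_phiLe, ← image_iUnion, ← iUnion_sdiff,
    iUnion_multiIndicesLe]
  congr 1
  ext x
  simp [eq_comm]

theorem exists_mem_cl_phiLe_union_image_iff (M : FinMatroid X) (a : X) (B : Set X) :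
    (∃ s, ∃ r ∈ multiIndicesLe d s, opPow φ r a ∈
        M.cl (PhiLe φ s B ∪ (fun u => opPow φ u a) '' (multiIndicesLe d s \ {r}))) ↔
      ∃ r : ∀ i : Fin k, Fin (d i) → ℕ,
        opPow φ r a ∈ M.cl (Theta φ B ∪
          {x | ∃ u : ∀ i : Fin k, Fin (d i) → ℕ, u ≠ r ∧ x = opPow φ u a}) := by
  simp_rw [← iUnion_phiLe_union_image φ B a]
  constructor
  · rintro ⟨s, r, -, hr⟩
    exact ⟨r, M.cl_mono (subset_iUnion (fun s => PhiLe φ s B ∪ _) s) hr⟩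
  · rintro ⟨r, hr⟩
    have hmono : Monotone fun s =>
        PhiLe φ s B ∪ (fun u => opPow φ u a) '' (multiIndicesLe d s \ {r}) :=
      fun _ _ hst => union_subset_union (phiLe_mono φ B hst)
        (image_mono (sdiff_subset_sdiff_left (multiIndicesLe_mono hst)))
    obtain ⟨s, hs⟩ := M.exists_mem_cl_of_mem_cl_iUnion hmono.directed_le hr
    exact ⟨s ⊔ fun i => ∑ j, r i j, r, fun i => le_sup_right,
      M.cl_mono (hmono le_sup_left) hs⟩

end MultiIndex

theorem statement11_general {X : Type*} (M : FinMatroid X) {k : ℕ} {d : Fin k → ℕ}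
    (φ : ∀ i : Fin k, Fin (d i) → X → X)
    (a : X) (B : Set X) :
    a ∈ clPhiStar M φ B ↔
      ∃ r : ∀ i : Fin k, Fin (d i) → ℕ,
        opPow φ r a ∈ M.cl (Theta φ B ∪
          {x | ∃ u : ∀ i : Fin k, Fin (d i) → ℕ, u ≠ r ∧ x = opPow φ u a}) := by
  rw [← exists_mem_cl_phiLe_union_image_iff]
  refine exists_congr fun s => ?_
  rw [← M.rk_image_lt_ncard_iff (multiIndicesLe_finite s), ← phiLe_singleton, ← cntLe_eq_ncard]

/-- **Proposition 3.3.** For `a ∈ X` and `B ⊆ X`: `a ∈ cl^{Φ*}(B)` if and only if the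
family `(φ^r̄(a))_{r̄ ∈ ℕ^m}` is not `cl`-independent over `Θ(B)`, i.e. iff some
`φ^r̄(a)` lies in the closure of `Θ(B)` together with the remaining `φ^ū(a)`. -/
theorem statement11 {X : Type*} (M : FinMatroid X) {k : ℕ} (hk : 0 < k) {d : Fin k → ℕ}
    (hd : ∀ i, 0 < d i) (φ : ∀ i : Fin k, Fin (d i) → X → X) (hcomm : Commuting φ)
    (a : X) (B : Set X) :
    a ∈ clPhiStar M φ B ↔
      ∃ r : ∀ i : Fin k, Fin (d i) → ℕ,
        opPow φ r a ∈ M.cl (Theta φ B ∪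
          {x | ∃ u : ∀ i : Fin k, Fin (d i) → ℕ, u ≠ r ∧ x = opPow φ u a}) :=
  statement11_general M φ a B
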